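/- arXiv:2211.07045 — 4 statements merged into one kernel-verified Lean document; each statement's English description precedes it below -/
import Mathlib

section
/- Let ξ : [0,t_f] → M solve ξ̇(t) = f_{u(t)}(ξ(t)) for an input u : [0,t_f] → L, let X_d : [0,t_f] → G be a lifted trajectory for the input u_d, and let ξ_e(t) := φ(X_d(t)⁻¹, ξ(t)), ũ := u − u_d, ξ_d(t) := φ(X_d(t), ξ̄). Then the error trajectory satisfies ξ̇_e(t) = Dφ_{ξ_e(t)}|_Id[ Ad_{X_d(t)⁻¹}( Λ(φ(X_d(t), ξ_e(t)), u_d(t)) − Λ(ξ_d(t), u_d(t)) ) ] + (Φ_{X_d(t)⁻¹} g)(ξ_e(t))[ũ(t)] for all t. -/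
open scoped Manifold

/-!
Differentiate `ξ_e = φ (X_d⁻¹, ξ)` by the product rule for the action. Since `Ẋ_d` is the
right translate of `η = Λ(ξ_d, u_d)`, the curve `X_d⁻¹` has velocity `-X_d⁻¹ η`, and the
equivariance `φ (Z Y) p = φ (Z Y Z⁻¹) (φ Z p)` turns the orbit derivative at `Z = X_d⁻¹`, as well
as the pushforward by `φ_Z` of `f_{u_d}(ξ) = Dφ_ξ|₁ Λ(ξ, u_d)`, into `Dφ_{ξ_e}|₁ ∘ Ad_Z`.
What remains of `φ_Z`'s pushforward of `f_u(ξ)` is the input-error term `(Φ_Z g)(ξ_e)[u - u_d]`.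
-/

section ChainRule

variable {𝕜 : Type*} [NontriviallyNormedField 𝕜]
  {E : Type*} [NormedAddCommGroup E] [NormedSpace 𝕜 E]
  {H : Type*} [TopologicalSpace H] {I : ModelWithCorners 𝕜 E H}
  {M : Type*} [TopologicalSpace M] [ChartedSpace H M]
  {E' : Type*} [NormedAddCommGroup E'] [NormedSpace 𝕜 E']
  {H' : Type*} [TopologicalSpace H'] {I' : ModelWithCorners 𝕜 E' H'}
  {M' : Type*} [TopologicalSpace M'] [ChartedSpace H' M']
  {E'' : Type*} [NormedAddCommGroup E''] [NormedSpace 𝕜 E'']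
  {H'' : Type*} [TopologicalSpace H''] {I'' : ModelWithCorners 𝕜 E'' H''}
  {M'' : Type*} [TopologicalSpace M''] [ChartedSpace H'' M'']

theorem mfderiv_apply_of_forall_eq_comp {F : M → M''} {g : M' → M''} {f : M → M'} {x : M} {y : M'}
    (hF : ∀ z, F z = g (f z)) (hg : MDifferentiableAt I' I'' g y)
    (hf : MDifferentiableAt I I' f x) (hxy : f x = y) (v : TangentSpace I x) :
    mfderiv I I'' F x v = mfderiv I' I'' g y (mfderiv I I' f x v) := by
  rw [show F = g ∘ f from funext hF]
  exact mfderiv_comp_apply_of_eq x hg hf hxy v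

end ChainRule

section LieGroup

variable {𝕜 : Type*} [NontriviallyNormedField 𝕜]
  {E : Type*} [NormedAddCommGroup E] [NormedSpace 𝕜 E]
  {H : Type*} [TopologicalSpace H] {I : ModelWithCorners 𝕜 E H}
  {N : Type*} [TopologicalSpace N] [ChartedSpace H N]
  {E' : Type*} [NormedAddCommGroup E'] [NormedSpace 𝕜 E']
  {H' : Type*} [TopologicalSpace H'] {J : ModelWithCorners 𝕜 E' H'}
  {G : Type*} [TopologicalSpace G] [ChartedSpace H' G] [Group G] [LieGroup J 1 G]

theorem mfderiv_mul_left_inv_mul_left {a b c : G} (h : a * b = c) (v : TangentSpace J b) :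
    mfderiv J J (a⁻¹ * ·) c (mfderiv J J (a * ·) b v) = v := by
  rw [← mfderiv_apply_of_forall_eq_comp (F := id) (fun z => (inv_mul_cancel_left a z).symm)
    mdifferentiableAt_mul_left mdifferentiableAt_mul_left h v, mfderiv_id]
  rfl

theorem mfderiv_mul_right_inv_mul_right {a b c : G} (h : b * a = c) (v : TangentSpace J b) :
    mfderiv J J (· * a⁻¹) c (mfderiv J J (· * a) b v) = v := by
  rw [← mfderiv_apply_of_forall_eq_comp (F := id) (g := (· * a⁻¹)) (f := (· * a))
    (fun z => (mul_inv_cancel_right z a).symm)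
    mdifferentiableAt_mul_right mdifferentiableAt_mul_right h v, mfderiv_id]
  rfl

theorem mfderiv_inv_apply {γ : N → G} {x : N} (hγ : MDifferentiableAt I J γ x)
    (v : TangentSpace I x) :
    mfderiv I J (fun s => (γ s)⁻¹) x v
      = -mfderiv J J ((γ x)⁻¹ * ·) 1 (mfderiv J J (· * (γ x)⁻¹) (γ x) (mfderiv I J γ x v)) := by
  have hγinv : MDifferentiableAt I J (fun s => (γ s)⁻¹) x :=
    ((contMDiff_inv J 1).mdifferentiableAt one_ne_zero).comp x hγ
  have hmul : MDifferentiableAt (J.prod J) J (fun q : G × G => q.1 * q.2) (γ x, (γ x)⁻¹) :=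
    (contMDiff_mul J 1).mdifferentiableAt one_ne_zero
  -- differentiate `γ γ⁻¹ = 1`
  have hzero : mfderiv J J (· * (γ x)⁻¹) (γ x) (mfderiv I J γ x v)
      + mfderiv J J (γ x * ·) (γ x)⁻¹ (mfderiv I J (fun s => (γ s)⁻¹) x v) = 0 := by
    have hconst := mfderiv_apply_of_forall_eq_comp (F := fun _ => (1 : G))
      (fun s => (mul_inv_cancel (γ s)).symm) hmul (hγ.prodMk hγinv) rfl v
    rw [mfderiv_const, hγ.mfderiv_prod hγinv] at hconst
    exact (hconst.trans (mfderiv_prod_eq_add_apply hmul)).symm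
  rw [← mfderiv_mul_left_inv_mul_left (J := J) (mul_inv_cancel (γ x)) (mfderiv I J _ x v),
    eq_neg_of_add_eq_zero_right hzero]
  exact map_neg _ _

theorem mfderiv_inv_apply_of_eq_mfderiv_mul_right {γ : N → G} {x : N}
    (hγ : MDifferentiableAt I J γ x) {v : TangentSpace I x} {η : TangentSpace J (1 : G)}
    (h : mfderiv I J γ x v = mfderiv J J (· * γ x) 1 η) :
    mfderiv I J (fun s => (γ s)⁻¹) x v = -mfderiv J J ((γ x)⁻¹ * ·) 1 η := by
  rw [mfderiv_inv_apply hγ, h, mfderiv_mul_right_inv_mul_right (one_mul _)]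

end LieGroup

section Action

variable {𝕜 : Type*} [NontriviallyNormedField 𝕜]
  {E : Type*} [NormedAddCommGroup E] [NormedSpace 𝕜 E]
  {H : Type*} [TopologicalSpace H] {I : ModelWithCorners 𝕜 E H}
  {M : Type*} [TopologicalSpace M] [ChartedSpace H M]
  {E' : Type*} [NormedAddCommGroup E'] [NormedSpace 𝕜 E']
  {H' : Type*} [TopologicalSpace H'] {J : ModelWithCorners 𝕜 E' H'}
  {G : Type*} [TopologicalSpace G] [ChartedSpace H' G]
  {φ : G → M → M}

theorem mfderiv_act_comp_apply
    {E'' : Type*} [NormedAddCommGroup E''] [NormedSpace 𝕜 E'']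
    {H'' : Type*} [TopologicalSpace H''] {I' : ModelWithCorners 𝕜 E'' H''}
    {N : Type*} [TopologicalSpace N] [ChartedSpace H'' N]
    {Z : N → G} {ξ : N → M} {x : N}
    (hφ : MDifferentiableAt (J.prod I) I (fun q : G × M => φ q.1 q.2) (Z x, ξ x))
    (hZ : MDifferentiableAt I' J Z x) (hξ : MDifferentiableAt I' I ξ x) (v : TangentSpace I' x) :
    mfderiv I' I (fun s => φ (Z s) (ξ s)) x v
      = mfderiv J I (fun Y => φ Y (ξ x)) (Z x) (mfderiv I' J Z x v)
        + mfderiv I I (fun p => φ (Z x) p) (ξ x) (mfderiv I' I ξ x v) := by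
  rw [mfderiv_apply_of_forall_eq_comp (g := fun q : G × M => φ q.1 q.2) (f := fun s => (Z s, ξ s))
    (fun _ => rfl) hφ (hZ.prodMk hξ) rfl v, hZ.mfderiv_prod hξ]
  exact mfderiv_prod_eq_add_apply hφ

variable (hφ : MDifferentiable (J.prod I) I (fun q : G × M => φ q.1 q.2))
include hφ

theorem mdifferentiable_orbit (p : M) : MDifferentiable J I (fun Y => φ Y p) :=
  hφ.comp (mdifferentiable_id.prodMk mdifferentiable_const)

theorem mdifferentiable_act (Z : G) : MDifferentiable I I (fun p => φ Z p) :=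
  hφ.comp (mdifferentiable_const.prodMk mdifferentiable_id)

variable [Group G] [LieGroup J 1 G] (hφ_comp : ∀ (X Y : G) (p : M), φ X (φ Y p) = φ (X * Y) p)
include hφ_comp

-- Both sides are the derivative of `Y ↦ φ (Z * Y) p = φ (Z * Y * Z⁻¹) (φ Z p)` at `1`.
theorem mfderiv_orbit_mul_left_eq_conj (Z : G) (p : M) (w : TangentSpace J (1 : G)) :
    mfderiv J I (fun Y => φ (Z * Y) p) 1 w
      = mfderiv J I (fun Y => φ Y (φ Z p)) 1 (mfderiv J J (fun Y => Z * Y * Z⁻¹) 1 w) :=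
  mfderiv_apply_of_forall_eq_comp (fun Y => by simp [hφ_comp, mul_assoc])
    (mdifferentiable_orbit hφ _ 1)
    (mdifferentiableAt_mul_right.comp 1 mdifferentiableAt_mul_left) (by simp) w

theorem mfderiv_orbit_mul_left (Z : G) (p : M) (w : TangentSpace J (1 : G)) :
    mfderiv J I (fun Y => φ Y p) Z (mfderiv J J (Z * ·) 1 w)
      = mfderiv J I (fun Y => φ Y (φ Z p)) 1 (mfderiv J J (fun Y => Z * Y * Z⁻¹) 1 w) := by
  rw [← mfderiv_orbit_mul_left_eq_conj hφ hφ_comp]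
  exact (mfderiv_apply_of_forall_eq_comp (F := fun Y => φ (Z * Y) p) (f := (Z * ·))
    (fun _ => rfl) (mdifferentiable_orbit hφ p Z)
    mdifferentiableAt_mul_left (mul_one Z) w).symm

theorem mfderiv_act_orbit (hφ_id : ∀ p : M, φ 1 p = p) (Z : G) (p : M)
    (w : TangentSpace J (1 : G)) :
    mfderiv I I (fun q => φ Z q) p (mfderiv J I (fun Y => φ Y p) 1 w)
      = mfderiv J I (fun Y => φ Y (φ Z p)) 1 (mfderiv J J (fun Y => Z * Y * Z⁻¹) 1 w) := by
  rw [← mfderiv_orbit_mul_left_eq_conj hφ hφ_comp]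
  exact (mfderiv_apply_of_forall_eq_comp (fun Y => (hφ_comp Z Y p).symm)
    (mdifferentiable_act hφ Z p) (mdifferentiable_orbit hφ p 1) (hφ_id p) w).symm

/- The cast through `id` lets us add tangent vectors based at `φ 1 q` and at `q`, points that are
only propositionally equal. -/
theorem mfderiv_act_inv_apply_of_eq_mfderiv_mul_right
    {E'' : Type*} [NormedAddCommGroup E''] [NormedSpace 𝕜 E'']
    {H'' : Type*} [TopologicalSpace H''] {I' : ModelWithCorners 𝕜 E'' H''}
    {N : Type*} [TopologicalSpace N] [ChartedSpace H'' N]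
    {X : N → G} {ξ : N → M} {x : N} (hX : MDifferentiableAt I' J X x)
    (hξ : MDifferentiableAt I' I ξ x) {v : TangentSpace I' x} {η : TangentSpace J (1 : G)}
    (hXη : mfderiv I' J X x v = mfderiv J J (· * X x) 1 η) :
    mfderiv I' I (fun s => φ (X s)⁻¹ (ξ s)) x v
      = -(id (mfderiv J I (fun Y => φ Y (φ (X x)⁻¹ (ξ x))) 1
            (mfderiv J J (fun Y => (X x)⁻¹ * Y * ((X x)⁻¹)⁻¹) 1 η)) :
            TangentSpace I (φ (X x)⁻¹ (ξ x)))
        + mfderiv I I (fun p => φ (X x)⁻¹ p) (ξ x) (mfderiv I' I ξ x v) := by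
  have hX_inv : MDifferentiableAt I' J (fun s => (X s)⁻¹) x :=
    ((contMDiff_inv J 1).mdifferentiable one_ne_zero _).comp x hX
  rw [mfderiv_act_comp_apply (hφ _) hX_inv hξ, mfderiv_inv_apply_of_eq_mfderiv_mul_right hX hXη,
    ← mfderiv_orbit_mul_left hφ hφ_comp]
  congr 1
  exact map_neg _ _

end Action

theorem stmt_1_general
    {E : Type*} [NormedAddCommGroup E] [NormedSpace ℝ E]
    {H : Type*} [TopologicalSpace H] {I : ModelWithCorners ℝ E H}
    {M : Type*} [TopologicalSpace M] [ChartedSpace H M]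
    {E' : Type*} [NormedAddCommGroup E'] [NormedSpace ℝ E']
    {H' : Type*} [TopologicalSpace H'] {J : ModelWithCorners ℝ E' H'}
    {G : Type*} [TopologicalSpace G] [ChartedSpace H' G] [Group G] [LieGroup J (⊤ : ℕ∞) G]
    {L : Type*} [NormedAddCommGroup L] [NormedSpace ℝ L]
    -- the left action and its properties
    (φ : G → M → M)
    (hφ_id : ∀ p : M, φ 1 p = p)
    (hφ_comp : ∀ (X Y : G) (p : M), φ X (φ Y p) = φ (X * Y) p)
    (hφ_smooth : ContMDiff (J.prod I) I (⊤ : ℕ∞) (fun q : G × M => φ q.1 q.2))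
    -- the input-affine system `f_u = f₀ + g[u]` and the lift `Λ`
    (f₀ : (p : M) → TangentSpace I p)
    (g : (p : M) → L →L[ℝ] TangentSpace I p)
    (Λ : M → L → TangentSpace J (1 : G))
    (hlift : ∀ (p : M) (u : L), mfderiv J I (fun Y => φ Y p) 1 (Λ p u) = f₀ p + g p u)
    -- the origin, the inputs, the system trajectory and the lifted trajectory
    (ξo : M) (u u_d : ℝ → L)
    (ξ : ℝ → M) (hξ : MDifferentiable 𝓘(ℝ, ℝ) I ξ)
    (hξ_ode : ∀ t : ℝ, mfderiv 𝓘(ℝ, ℝ) I ξ t (1 : ℝ) = f₀ (ξ t) + g (ξ t) (u t))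
    (X_d : ℝ → G) (hX_d : MDifferentiable 𝓘(ℝ, ℝ) J X_d)
    (hX_d_ode : ∀ t : ℝ, mfderiv 𝓘(ℝ, ℝ) J X_d t (1 : ℝ)
      = mfderiv J J (fun Y => Y * X_d t) 1 (Λ (φ (X_d t) ξo) (u_d t)))
    -- the error trajectory `ξ_e`, the desired trajectory `ξ_d` and the input error `ũ`
    (ξ_e : ℝ → M) (hξ_e : ∀ t, ξ_e t = φ (X_d t)⁻¹ (ξ t))
    (ξ_d : ℝ → M) (hξ_d : ∀ t, ξ_d t = φ (X_d t) ξo)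
    (ut : ℝ → L) (hut : ∀ t, ut t = u t - u_d t) :
    ∀ t : ℝ, (id (mfderiv 𝓘(ℝ, ℝ) I ξ_e t (1 : ℝ)) : E)
      = (id (mfderiv J I (fun Y => φ Y (ξ_e t)) 1
          (mfderiv J J (fun Y => (X_d t)⁻¹ * Y * ((X_d t)⁻¹)⁻¹) 1
            (Λ (φ (X_d t) (ξ_e t)) (u_d t) - Λ (ξ_d t) (u_d t)))) : E)
        + (id (mfderiv I I (fun p => φ (X_d t)⁻¹ p) (φ ((X_d t)⁻¹)⁻¹ (ξ_e t))
            (g (φ ((X_d t)⁻¹)⁻¹ (ξ_e t)) (ut t))) : E) := by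
  intro t
  have hφ := hφ_smooth.mdifferentiable (by simp)
  obtain rfl : ξ_e = fun s => φ (X_d s)⁻¹ (ξ s) := funext hξ_e
  obtain rfl : ξ_d = fun s => φ (X_d s) ξo := funext hξ_d
  obtain rfl : ut = fun s => u s - u_d s := funext hut
  have hact_inv : φ (X_d t) (φ (X_d t)⁻¹ (ξ t)) = ξ t := by rw [hφ_comp, mul_inv_cancel, hφ_id]
  have hinv_act : φ (X_d t)⁻¹⁻¹ (φ (X_d t)⁻¹ (ξ t)) = ξ t := by rw [inv_inv, hact_inv]
  have hinput : f₀ (ξ t) + g (ξ t) (u t)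
      = (f₀ (ξ t) + g (ξ t) (u_d t)) + g (ξ t) (u t - u_d t) := by
    rw [map_sub]; abel
  rw [hact_inv, hinv_act,
    mfderiv_act_inv_apply_of_eq_mfderiv_mul_right hφ hφ_comp (hX_d t) (hξ t) (hX_d_ode t), hξ_ode,
    hinput, map_add, ← hlift, mfderiv_act_orbit hφ hφ_comp hφ_id,
    map_sub (mfderiv J J (fun Y => (X_d t)⁻¹ * Y * ((X_d t)⁻¹)⁻¹) 1)]
  -- `rw` fails: the outer map expects `T₁G`, the conjugation lands in `T_{X_d⁻¹ 1 X_d}G`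
  erw [map_sub (mfderiv J I (fun Y => φ Y (φ (X_d t)⁻¹ (ξ t))) 1)]
  simp only [id]
  abel

/-- **error dynamics on `M`, Proposition 2 of the paper.**
`M` is a smooth manifold (model `I`), `G` a Lie group (model `J`) with Lie algebra
`𝔤 = T₁G`, acting smoothly on `M` via a left action `φ`.  The input-affine system is
`f_u(p) = f₀(p) + g(p)[u]` and `Λ` is a lift, i.e. `Dφ_p|₁[Λ(p,u)] = f_u(p)`.
Let `ξ` solve `ξ̇ = f_{u(t)}(ξ)`, let `X_d` be a lifted trajectory for the input `u_d`
(with origin `ξo`), and set `ξ_e(t) = φ(X_d(t)⁻¹, ξ(t))`, `ξ_d(t) = φ(X_d(t), ξo)`,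
`ũ = u - u_d`.  Then
`ξ̇_e = Dφ_{ξ_e}|₁[Ad_{X_d⁻¹}(Λ(φ(X_d, ξ_e), u_d) - Λ(ξ_d, u_d))] + (Φ_{X_d⁻¹} g)(ξ_e)[ũ]`,
where `Ad_X = D(Y ↦ XYX⁻¹)|₁` and `(Φ_X h)(p) = Dφ_X|_{φ(X⁻¹,p)}[h(φ(X⁻¹,p))]`. -/
theorem stmt_1
    {E : Type*} [NormedAddCommGroup E] [NormedSpace ℝ E]
    {H : Type*} [TopologicalSpace H] {I : ModelWithCorners ℝ E H}
    {M : Type*} [TopologicalSpace M] [ChartedSpace H M] [IsManifold I (⊤ : ℕ∞) M]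
    {E' : Type*} [NormedAddCommGroup E'] [NormedSpace ℝ E']
    {H' : Type*} [TopologicalSpace H'] {J : ModelWithCorners ℝ E' H'}
    {G : Type*} [TopologicalSpace G] [ChartedSpace H' G] [Group G] [LieGroup J (⊤ : ℕ∞) G]
    {L : Type*} [NormedAddCommGroup L] [NormedSpace ℝ L] [FiniteDimensional ℝ L]
    -- the left action and its properties
    (φ : G → M → M)
    (hφ_id : ∀ p : M, φ 1 p = p)
    (hφ_comp : ∀ (X Y : G) (p : M), φ X (φ Y p) = φ (X * Y) p)
    (hφ_smooth : ContMDiff (J.prod I) I (⊤ : ℕ∞) (fun q : G × M => φ q.1 q.2))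
    -- the input-affine system `f_u = f₀ + g[u]` and the lift `Λ`
    (f₀ : (p : M) → TangentSpace I p)
    (g : (p : M) → L →L[ℝ] TangentSpace I p)
    (Λ : M → L → TangentSpace J (1 : G))
    (hΛ_smooth : ContMDiff (I.prod 𝓘(ℝ, L)) 𝓘(ℝ, E') (⊤ : ℕ∞) (fun q : M × L => (id (Λ q.1 q.2) : E')))
    (hlift : ∀ (p : M) (u : L), mfderiv J I (fun Y => φ Y p) 1 (Λ p u) = f₀ p + g p u)
    -- the origin, the inputs, the system trajectory and the lifted trajectory
    (ξo : M) (u u_d : ℝ → L)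
    (ξ : ℝ → M) (hξ : MDifferentiable 𝓘(ℝ, ℝ) I ξ)
    (hξ_ode : ∀ t : ℝ, mfderiv 𝓘(ℝ, ℝ) I ξ t (1 : ℝ) = f₀ (ξ t) + g (ξ t) (u t))
    (X_d : ℝ → G) (hX_d : MDifferentiable 𝓘(ℝ, ℝ) J X_d)
    (hX_d_ode : ∀ t : ℝ, mfderiv 𝓘(ℝ, ℝ) J X_d t (1 : ℝ)
      = mfderiv J J (fun Y => Y * X_d t) 1 (Λ (φ (X_d t) ξo) (u_d t)))
    -- the error trajectory `ξ_e`, the desired trajectory `ξ_d` and the input error `ũ`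
    (ξ_e : ℝ → M) (hξ_e : ∀ t, ξ_e t = φ (X_d t)⁻¹ (ξ t))
    (ξ_d : ℝ → M) (hξ_d : ∀ t, ξ_d t = φ (X_d t) ξo)
    (ut : ℝ → L) (hut : ∀ t, ut t = u t - u_d t) :
    ∀ t : ℝ, (id (mfderiv 𝓘(ℝ, ℝ) I ξ_e t (1 : ℝ)) : E)
      = (id (mfderiv J I (fun Y => φ Y (ξ_e t)) 1
          (mfderiv J J (fun Y => (X_d t)⁻¹ * Y * ((X_d t)⁻¹)⁻¹) 1
            (Λ (φ (X_d t) (ξ_e t)) (u_d t) - Λ (ξ_d t) (u_d t)))) : E)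
        + (id (mfderiv I I (fun p => φ (X_d t)⁻¹ p) (φ ((X_d t)⁻¹)⁻¹ (ξ_e t))
            (g (φ ((X_d t)⁻¹)⁻¹ (ξ_e t)) (ut t))) : E) :=
  stmt_1_general φ hφ_id hφ_comp hφ_smooth f₀ g Λ hlift ξo u u_d ξ hξ hξ_ode X_d hX_d hX_d_ode ξ_e
    hξ_e ξ_d hξ_d ut hut
end

section
/- Fix t and write X_d = X_d(t), u_d = u_d(t), ξ_d = φ(X_d, ξ̄). Define the drift map F : ℝ^m → ℝ^m (on a neighbourhood of 0) by F(ε) := Dχ ∘ Dφ_{χ⁻¹(ε)}|_Id [ Ad_{X_d⁻¹}( Λ(φ(X_d, χ⁻¹(ε)), u_d) − Λ(ξ_d, u_d) ) ]. Then F(0) = 0 and the derivative of F at ε = 0 equals the linear map A(t) := Dχ|_{ξ̄} ∘ Dφ_{ξ̄}|_Id ∘ Ad_{X_d⁻¹} ∘ D_ξ Λ(ξ, u_d)|_{ξ = ξ_d} ∘ Dφ_{X_d}|_{ξ̄} ∘ Dχ⁻¹|_0; moreover the input coefficient of the ε-dynamics ε̇ = F(ε) + Dχ|_{χ⁻¹(ε)}(Φ_{X_d⁻¹}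 g)(χ⁻¹(ε))[ũ] evaluated at ε = 0 is the linear map B(t) := Dχ|_{ξ̄} ∘ (Φ_{X_d⁻¹} g)(ξ̄). -/
open scoped Manifold

/-!
Write `Ψ ε = Dχ|_{χinv ε} ∘ Dφ_{χinv ε}|₁` and
`w ε = Ad_{X_d⁻¹} (Λ(φ(X_d, χinv ε), u_d) - Λ(ξ_d, u_d))`, so that `F ε = Ψ ε (w ε)`.
Since `w 0 = 0`, the product rule leaves only `Ψ 0 ∘ Dw|₀` as the derivative of `F` at `0`,
and `Dw|₀` is given by the chain rule. The one analytic input is that `Ψ` is differentiable: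
because `φ(1, ·) = id`, the chain rule identifies `Ψ ε` with the derivative at `1` of
`Y ↦ χ (φ(Y, χinv ε))`, and the derivative in `Y` of a jointly `C²` map is `C¹` in the parameter.
-/

open Filter

theorem DifferentiableAt.hasFDerivAt_clm_apply_of_eq_zero {𝕜 : Type*}
    [NontriviallyNormedField 𝕜] {E F G : Type*} [NormedAddCommGroup E] [NormedSpace 𝕜 E]
    [NormedAddCommGroup F] [NormedSpace 𝕜 F] [NormedAddCommGroup G] [NormedSpace 𝕜 G]
    {Ψ : E → F →L[𝕜] G} {v : E → F} {v' : E →L[𝕜] F} {x : E}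
    (hΨ : DifferentiableAt 𝕜 Ψ x) (hv : HasFDerivAt v v' x) (hv0 : v x = 0) :
    HasFDerivAt (fun y => Ψ y (v y)) ((Ψ x).comp v') x := by
  simpa [hv0] using hΨ.hasFDerivAt.clm_apply hv

section Manifold

variable {𝕜 : Type*} [NontriviallyNormedField 𝕜]
  {E : Type*} [NormedAddCommGroup E] [NormedSpace 𝕜 E] {H : Type*} [TopologicalSpace H]
  {I : ModelWithCorners 𝕜 E H} {M : Type*} [TopologicalSpace M] [ChartedSpace H M]
  {E' : Type*} [NormedAddCommGroup E'] [NormedSpace 𝕜 E'] {H' : Type*} [TopologicalSpace H']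
  {I' : ModelWithCorners 𝕜 E' H'} {M' : Type*} [TopologicalSpace M'] [ChartedSpace H' M']
  {V W : Type*} [NormedAddCommGroup V] [NormedSpace 𝕜 V] [NormedAddCommGroup W]
  [NormedSpace 𝕜 W]

theorem mfderiv_comp_of_apply_eq {E'' : Type*} [NormedAddCommGroup E''] [NormedSpace 𝕜 E'']
    {H'' : Type*} [TopologicalSpace H''] {I'' : ModelWithCorners 𝕜 E'' H''} {M'' : Type*}
    [TopologicalSpace M''] [ChartedSpace H'' M''] {f : M → M'} {g : M' → M''} {x : M} {y : M'}
    (hg : MDifferentiableAt I' I'' g y) (hf : MDifferentiableAt I I' f x) (hy : f x = y) :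
    mfderiv I I'' (g ∘ f) x = (mfderiv I' I'' g y).comp (mfderiv I I' f x) := by
  subst hy
  exact mfderiv_comp x hg hf

theorem MDifferentiableAt.hasFDerivAt_comp_comp {σ : V → M} {f : M → M'} {h : M' → W} {x : V}
    (hh : MDifferentiableAt I' 𝓘(𝕜, W) h (f (σ x))) (hf : MDifferentiableAt I I' f (σ x))
    (hσ : MDifferentiableAt 𝓘(𝕜, V) I σ x) :
    HasFDerivAt (fun y => h (f (σ y)))
      ((mfderiv I' 𝓘(𝕜, W) h (f (σ x))).comp ((mfderiv I I' f (σ x)).comp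
        (mfderiv 𝓘(𝕜, V) I σ x))) x :=
  ((hh.hasMFDerivAt.comp (σ x) hf.hasMFDerivAt).comp x hσ.hasMFDerivAt).hasFDerivAt

theorem differentiableAt_mfderiv_of_contMDiffAt_uncurry [IsManifold I 1 M]
    {f : V → M → W} {x₀ : V} {y₀ : M}
    (hf : ContMDiffAt (𝓘(𝕜, V).prod I) 𝓘(𝕜, W) 2 (Function.uncurry f) (x₀, y₀)) :
    DifferentiableAt 𝕜 (F := E →L[𝕜] W) (fun x => mfderiv I 𝓘(𝕜, W) (f x) y₀) x₀ := by
  set Φ : V → E →L[𝕜] W := fun x => mfderiv I 𝓘(𝕜, W) (f x) y₀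
  have h : ContMDiffAt 𝓘(𝕜, V) 𝓘(𝕜, E →L[𝕜] W) 1
      (inTangentCoordinates I 𝓘(𝕜, W) (fun _ => y₀) (fun x => f x y₀) Φ x₀) x₀ :=
    ContMDiffAt.mfderiv f (fun _ => y₀) hf contMDiffAt_const le_rfl
  refine (h.mdifferentiableAt one_ne_zero).differentiableAt.congr_of_eventuallyEq
    (Eventually.of_forall fun x => Eq.symm ?_)
  -- at a constant base point both coordinate changes are the identity
  rw [inTangentCoordinates_eq _ _ _ (mem_chart_source H y₀) (Set.mem_univ _)]
  ext v
  simp only [ContinuousLinearMap.comp_apply, tangentBundleCore_coordChange_model_space,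
    ContinuousLinearMap.coe_id', id_eq]
  rw [(tangentBundleCore I M).coordChange_self (achart H y₀) y₀ (mem_chart_source H y₀) v]

theorem differentiableAt_mfderiv_comp_mfderiv_orbit [IsManifold I 1 M] [IsManifold I' 1 M']
    [One M'] {φ : M' → M → M} (hφ_one : ∀ p, φ 1 p = p)
    (hφ : ContMDiff (I'.prod I) I 2 (fun q : M' × M => φ q.1 q.2))
    {χ : M → W} {σ : V → M} {x₀ : V}
    (hχ : ContMDiffAt I 𝓘(𝕜, W) 2 χ (σ x₀)) (hσ : ContMDiffAt 𝓘(𝕜, V) I 2 σ x₀) :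
    DifferentiableAt 𝕜 (F := E' →L[𝕜] W) (fun x =>
      (mfderiv I 𝓘(𝕜, W) χ (σ x)).comp (mfderiv I' I (fun Y => φ Y (σ x)) 1)) x₀ := by
  have hjoint : ContMDiffAt (𝓘(𝕜, V).prod I') 𝓘(𝕜, W) 2
      (Function.uncurry fun x Y => χ (φ Y (σ x))) (x₀, 1) := by
    have hχ' : ContMDiffAt I 𝓘(𝕜, W) 2 χ (φ 1 (σ x₀)) := by rwa [hφ_one]
    exact hχ'.comp (x₀, 1) <| hφ.contMDiffAt.comp (x₀, 1)
      (contMDiffAt_snd.prodMk (hσ.comp (x₀, 1) contMDiffAt_fst))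
  have hχ_near : ∀ᶠ x in nhds x₀, MDifferentiableAt I 𝓘(𝕜, W) χ (σ x) :=
    (hσ.continuousAt.eventually ((contMDiffAt_iff_contMDiffAt_nhds (by simp)).mp
      (hχ.of_le one_le_two))).mono fun _ h => h.mdifferentiableAt one_ne_zero
  refine (differentiableAt_mfderiv_of_contMDiffAt_uncurry hjoint).congr_of_eventuallyEq ?_
  filter_upwards [hχ_near] with x hx
  exact (mfderiv_comp_of_apply_eq hx
    ((hφ.comp (contMDiff_id.prodMk contMDiff_const)).mdifferentiableAt two_ne_zero)
    (hφ_one _)).symm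

end Manifold

theorem stmt_3_general
    {E : Type*} [NormedAddCommGroup E] [NormedSpace ℝ E]
    {H : Type*} [TopologicalSpace H] {I : ModelWithCorners ℝ E H}
    {M : Type*} [TopologicalSpace M] [ChartedSpace H M] [IsManifold I (⊤ : ℕ∞) M]
    {E' : Type*} [NormedAddCommGroup E'] [NormedSpace ℝ E']
    {H' : Type*} [TopologicalSpace H'] {J : ModelWithCorners ℝ E' H'}
    {G : Type*} [TopologicalSpace G] [ChartedSpace H' G] [Group G] [LieGroup J (⊤ : ℕ∞) G]
    {L : Type*} [NormedAddCommGroup L] [NormedSpace ℝ L]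
    (m : ℕ)
    -- the left action
    (φ : G → M → M)
    (hφ_id : ∀ p : M, φ 1 p = p)
    (hφ_smooth : ContMDiff (J.prod I) I (⊤ : ℕ∞) (fun q : G × M => φ q.1 q.2))
    -- the input-affine system and the lift
    (g : (p : M) → L →L[ℝ] TangentSpace I p)
    (Λ : M → L → TangentSpace J (1 : G))
    (hΛ_smooth : ContMDiff (I.prod 𝓘(ℝ, L)) 𝓘(ℝ, E') (⊤ : ℕ∞) (fun q : M × L => (id (Λ q.1 q.2) : E')))
    -- a fixed time: the desired group element and input at that time
    (X_d : G) (u_d : L) (ξo : M) (ξ_d : M) (hξ_d : ξ_d = φ X_d ξo)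
    -- the local chart `χ` centred at `ξo`, with local inverse `χinv`
    (χ : M → EuclideanSpace ℝ (Fin m)) (χinv : EuclideanSpace ℝ (Fin m) → M)
    (hχinv0 : χinv 0 = ξo)
    (hχ_smooth : ContMDiffAt I 𝓘(ℝ, EuclideanSpace ℝ (Fin m)) (⊤ : ℕ∞) χ ξo)
    (hχinv_smooth : ContMDiffAt 𝓘(ℝ, EuclideanSpace ℝ (Fin m)) I (⊤ : ℕ∞) χinv 0)
    -- the drift map `F` of the error dynamics in local coordinates
    (F : EuclideanSpace ℝ (Fin m) → EuclideanSpace ℝ (Fin m))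
    (hF : ∀ ε, F ε
      = (id (mfderiv I 𝓘(ℝ, EuclideanSpace ℝ (Fin m)) χ (χinv ε)
          (mfderiv J I (fun Y => φ Y (χinv ε)) 1
            (mfderiv J J (fun Y => X_d⁻¹ * Y * X_d⁻¹⁻¹) 1
              (Λ (φ X_d (χinv ε)) u_d - Λ ξ_d u_d)))) : EuclideanSpace ℝ (Fin m))) :
    F 0 = 0
    ∧ HasFDerivAt F
        ((mfderiv I 𝓘(ℝ, EuclideanSpace ℝ (Fin m)) χ ξo).comp
          ((mfderiv J I (fun Y => φ Y ξo) 1).comp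
            ((mfderiv J J (fun Y => X_d⁻¹ * Y * X_d⁻¹⁻¹) 1).comp
              ((mfderiv I 𝓘(ℝ, E') (fun p => (id (Λ p u_d) : E')) ξ_d).comp
                ((mfderiv I I (fun p => φ X_d p) ξo).comp
                  (mfderiv 𝓘(ℝ, EuclideanSpace ℝ (Fin m)) I χinv 0)))))) 0
    ∧ (∀ ut : L,
        (id (mfderiv I 𝓘(ℝ, EuclideanSpace ℝ (Fin m)) χ (χinv 0)
          (mfderiv I I (fun p => φ X_d⁻¹ p) (φ X_d⁻¹⁻¹ (χinv 0))
            (g (φ X_d⁻¹⁻¹ (χinv 0)) ut))) : EuclideanSpace ℝ (Fin m))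
        = (id (mfderiv I 𝓘(ℝ, EuclideanSpace ℝ (Fin m)) χ ξo
            (mfderiv I I (fun p => φ X_d⁻¹ p) (φ X_d⁻¹⁻¹ ξo)
              (g (φ X_d⁻¹⁻¹ ξo) ut))) : EuclideanSpace ℝ (Fin m))) := by
  subst hξ_d hχinv0
  have h2 : (2 : WithTop ℕ∞) ≤ ((⊤ : ℕ∞) : WithTop ℕ∞) := WithTop.coe_le_coe.mpr le_top
  set Ψ : EuclideanSpace ℝ (Fin m) → E' →L[ℝ] EuclideanSpace ℝ (Fin m) := fun ε =>
    (mfderiv I 𝓘(ℝ, EuclideanSpace ℝ (Fin m)) χ (χinv ε)).comp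
      (mfderiv J I (fun Y => φ Y (χinv ε)) 1)
  set Ad : E' →L[ℝ] E' := mfderiv J J (fun Y => X_d⁻¹ * Y * X_d⁻¹⁻¹) 1
  set w : EuclideanSpace ℝ (Fin m) → E' := fun ε =>
    Ad ((id (Λ (φ X_d (χinv ε)) u_d) : E') - (id (Λ (φ X_d (χinv 0)) u_d) : E'))
  have hFΨ : F = fun ε => Ψ ε (w ε) := funext hF
  have hw0 : w 0 = 0 := by simp only [w, sub_self, map_zero]
  refine ⟨by simp only [hFΨ, hw0, map_zero], ?_, fun _ => rfl⟩
  have hΨ : DifferentiableAt ℝ Ψ 0 :=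
    differentiableAt_mfderiv_comp_mfderiv_orbit hφ_id (hφ_smooth.of_le h2)
      (hχ_smooth.of_le h2) (hχinv_smooth.of_le h2)
  have hw : HasFDerivAt w (Ad.comp
      ((mfderiv I 𝓘(ℝ, E') (fun p => (id (Λ p u_d) : E')) (φ X_d (χinv 0))).comp
        ((mfderiv I I (fun p => φ X_d p) (χinv 0)).comp
          (mfderiv 𝓘(ℝ, EuclideanSpace ℝ (Fin m)) I χinv 0)))) 0 :=
    Ad.hasFDerivAt.comp 0 <| (MDifferentiableAt.hasFDerivAt_comp_comp
      ((hΛ_smooth.comp (contMDiff_id.prodMk contMDiff_const)).mdifferentiableAt (by simp))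
      ((hφ_smooth.comp (contMDiff_const.prodMk contMDiff_id)).mdifferentiableAt (by simp))
      (hχinv_smooth.mdifferentiableAt (by simp))).sub_const _
  rw [hFΨ]
  exact hΨ.hasFDerivAt_clm_apply_of_eq_zero hw hw0

/-- **linearised error dynamics, Proposition 3 of the paper.**
`M` is a smooth `m`-dimensional manifold with a smooth left action `φ` of a Lie group
`G`, `f_u = f₀ + g[u]` is an input-affine system with lift `Λ`, `ξo` is a fixed origin,
`X_d ∈ G`, `ξ_d = φ(X_d, ξo)`, and `χ` is a local coordinate chart of `M` centred at
`ξo` (with local inverse `χinv`).  Define the drift map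
`F(ε) = Dχ ∘ Dφ_{χinv ε}|₁ [ Ad_{X_d⁻¹}(Λ(φ(X_d, χinv ε), u_d) − Λ(ξ_d, u_d)) ]`.
Then `F(0) = 0`, the derivative of `F` at `ε = 0` is
`A = Dχ|_{ξo} ∘ Dφ_{ξo}|₁ ∘ Ad_{X_d⁻¹} ∘ D_ξΛ(ξ,u_d)|_{ξ_d} ∘ Dφ_{X_d}|_{ξo} ∘ Dχinv|₀`,
and the input coefficient `ũ ↦ Dχ|_{χinv 0} (Φ_{X_d⁻¹}g)(χinv 0)[ũ]` of the
`ε`-dynamics evaluated at `ε = 0` is `B = Dχ|_{ξo} ∘ (Φ_{X_d⁻¹}g)(ξo)`. -/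
theorem stmt_3
    {E : Type*} [NormedAddCommGroup E] [NormedSpace ℝ E] [FiniteDimensional ℝ E]
    {H : Type*} [TopologicalSpace H] {I : ModelWithCorners ℝ E H}
    {M : Type*} [TopologicalSpace M] [ChartedSpace H M] [IsManifold I (⊤ : ℕ∞) M]
    {E' : Type*} [NormedAddCommGroup E'] [NormedSpace ℝ E']
    {H' : Type*} [TopologicalSpace H'] {J : ModelWithCorners ℝ E' H'}
    {G : Type*} [TopologicalSpace G] [ChartedSpace H' G] [Group G] [LieGroup J (⊤ : ℕ∞) G]
    {L : Type*} [NormedAddCommGroup L] [NormedSpace ℝ L] [FiniteDimensional ℝ L]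
    (m : ℕ) (hdim : Module.finrank ℝ E = m)
    -- the left action
    (φ : G → M → M)
    (hφ_id : ∀ p : M, φ 1 p = p)
    (hφ_comp : ∀ (X Y : G) (p : M), φ X (φ Y p) = φ (X * Y) p)
    (hφ_smooth : ContMDiff (J.prod I) I (⊤ : ℕ∞) (fun q : G × M => φ q.1 q.2))
    -- the input-affine system and the lift
    (f₀ : (p : M) → TangentSpace I p)
    (g : (p : M) → L →L[ℝ] TangentSpace I p)
    (Λ : M → L → TangentSpace J (1 : G))
    (hΛ_smooth : ContMDiff (I.prod 𝓘(ℝ, L)) 𝓘(ℝ, E') (⊤ : ℕ∞) (fun q : M × L => (id (Λ q.1 q.2) : E')))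
    (hlift : ∀ (p : M) (u : L), mfderiv J I (fun Y => φ Y p) 1 (Λ p u) = f₀ p + g p u)
    -- a fixed time: the desired group element and input at that time
    (X_d : G) (u_d : L) (ξo : M) (ξ_d : M) (hξ_d : ξ_d = φ X_d ξo)
    -- the local chart `χ` centred at `ξo`, with local inverse `χinv`
    (χ : M → EuclideanSpace ℝ (Fin m)) (χinv : EuclideanSpace ℝ (Fin m) → M)
    (hχ0 : χ ξo = 0) (hχinv0 : χinv 0 = ξo)
    (hχ_smooth : ContMDiffAt I 𝓘(ℝ, EuclideanSpace ℝ (Fin m)) (⊤ : ℕ∞) χ ξo)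
    (hχinv_smooth : ContMDiffAt 𝓘(ℝ, EuclideanSpace ℝ (Fin m)) I (⊤ : ℕ∞) χinv 0)
    (hχ_left_inv : ∀ᶠ p in nhds ξo, χinv (χ p) = p)
    (hχ_right_inv : ∀ᶠ ε in nhds (0 : EuclideanSpace ℝ (Fin m)), χ (χinv ε) = ε)
    -- the drift map `F` of the error dynamics in local coordinates
    (F : EuclideanSpace ℝ (Fin m) → EuclideanSpace ℝ (Fin m))
    (hF : ∀ ε, F ε
      = (id (mfderiv I 𝓘(ℝ, EuclideanSpace ℝ (Fin m)) χ (χinv ε)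
          (mfderiv J I (fun Y => φ Y (χinv ε)) 1
            (mfderiv J J (fun Y => X_d⁻¹ * Y * X_d⁻¹⁻¹) 1
              (Λ (φ X_d (χinv ε)) u_d - Λ ξ_d u_d)))) : EuclideanSpace ℝ (Fin m))) :
    F 0 = 0
    ∧ HasFDerivAt F
        ((mfderiv I 𝓘(ℝ, EuclideanSpace ℝ (Fin m)) χ ξo).comp
          ((mfderiv J I (fun Y => φ Y ξo) 1).comp
            ((mfderiv J J (fun Y => X_d⁻¹ * Y * X_d⁻¹⁻¹) 1).comp
              ((mfderiv I 𝓘(ℝ, E') (fun p => (id (Λ p u_d) : E')) ξ_d).comp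
                ((mfderiv I I (fun p => φ X_d p) ξo).comp
                  (mfderiv 𝓘(ℝ, EuclideanSpace ℝ (Fin m)) I χinv 0)))))) 0
    ∧ (∀ ut : L,
        (id (mfderiv I 𝓘(ℝ, EuclideanSpace ℝ (Fin m)) χ (χinv 0)
          (mfderiv I I (fun p => φ X_d⁻¹ p) (φ X_d⁻¹⁻¹ (χinv 0))
            (g (φ X_d⁻¹⁻¹ (χinv 0)) ut))) : EuclideanSpace ℝ (Fin m))
        = (id (mfderiv I 𝓘(ℝ, EuclideanSpace ℝ (Fin m)) χ ξo
            (mfderiv I I (fun p => φ X_d⁻¹ p) (φ X_d⁻¹⁻¹ ξo)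
              (g (φ X_d⁻¹⁻¹ ξo) ut))) : EuclideanSpace ℝ (Fin m))) :=
  stmt_3_general m φ hφ_id hφ_smooth g Λ hΛ_smooth X_d u_d ξo ξ_d hξ_d χ χinv hχinv0 hχ_smooth
    hχinv_smooth F hF
end

section
/- Let X : [0,t_f] → G be any solution of the lifted system Ẋ(t) = D R_{X(t)}|_Id[Λ(φ(X(t), ξ̄), u(t))] for an input u : [0,t_f] → L. Then the projected curve ξ(t) := φ(X(t), ξ̄) is a trajectory of the original system, i.e. ξ̇(t) = f_{u(t)}(ξ(t)) for all t. -/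
/-!
Right translation by `(X t)⁻¹` moves `X t` to the identity, and along the curve
`s ↦ X s * (X t)⁻¹`, which passes through `1` at time `t`, the action gives back
`φ(X s, ξ̄) = φ(X s * (X t)⁻¹, φ(X t, ξ̄))`. The chain rule therefore expresses `ξ̇(t)` as the
derivative of the orbit map of `φ(X t, ξ̄)` at `1` applied to `D R_{(X t)⁻¹} Ẋ(t)`, and by the
lifted equation this vector is `Λ(ξ(t), u(t))`; the lift property finishes the proof.
-/

open scoped Manifold

section

variable {𝕜 : Type*} [NontriviallyNormedField 𝕜]
  {E' : Type*} [NormedAddCommGroup E'] [NormedSpace 𝕜 E']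
  {H' : Type*} [TopologicalSpace H'] {J : ModelWithCorners 𝕜 E' H'}
  {G : Type*} [TopologicalSpace G] [ChartedSpace H' G] [Group G] [ContMDiffMul J 1 G]

theorem mfderiv_mul_right_inv_mfderiv_mul_right (a : G) (v : TangentSpace J (1 : G)) :
    mfderiv J J (· * a⁻¹) a (mfderiv J J (· * a) 1 v) = v := by
  have hcomp := mfderiv_comp_apply_of_eq (I' := J) (g := (· * a⁻¹)) (f := (· * a))
    1 mdifferentiableAt_mul_right mdifferentiableAt_mul_right (one_mul a) v
  have hid : (· * a⁻¹) ∘ (· * a) = (id : G → G) := funext fun Y => mul_inv_cancel_right Y a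
  rw [hid, mfderiv_id] at hcomp
  exact hcomp.symm

variable {E : Type*} [NormedAddCommGroup E] [NormedSpace 𝕜 E]
  {H : Type*} [TopologicalSpace H] {I : ModelWithCorners 𝕜 E H}
  {M : Type*} [TopologicalSpace M] [ChartedSpace H M]
  {F : Type*} [NormedAddCommGroup F] [NormedSpace 𝕜 F]
  {HN : Type*} [TopologicalSpace HN] {K : ModelWithCorners 𝕜 F HN}
  {N : Type*} [TopologicalSpace N] [ChartedSpace HN N]

theorem mfderiv_orbit_comp_of_mfderiv_eq_mfderiv_mul_right {φ : G → M → M}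
    (hφ_comp : ∀ (X Y : G) (p : M), φ X (φ Y p) = φ (X * Y) p) {X : N → G} {x : N} {ξ : M}
    (horbit : MDifferentiableAt J I (fun Y => φ Y (φ (X x) ξ)) 1)
    (hX : MDifferentiableAt K J X x) {w : TangentSpace K x} {v : TangentSpace J (1 : G)}
    (hv : mfderiv K J X x w = mfderiv J J (· * X x) 1 v) :
    mfderiv K I (fun y => φ (X y) ξ) x w = mfderiv J I (fun Y => φ Y (φ (X x) ξ)) 1 v := by
  have hfactor : (fun y => φ (X y) ξ) = (fun Y => φ Y (φ (X x) ξ)) ∘ (· * (X x)⁻¹) ∘ X := by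
    funext y
    simp only [Function.comp_apply, hφ_comp, inv_mul_cancel_right]
  have htranslate : MDifferentiableAt K J ((· * (X x)⁻¹) ∘ X) x :=
    mdifferentiableAt_mul_right.comp x hX
  have hchain : mfderiv K I (fun y => φ (X y) ξ) x = (mfderiv J I (fun Y => φ Y (φ (X x) ξ)) 1).comp
      ((mfderiv J J (· * (X x)⁻¹) (X x)).comp (mfderiv K J X x)) := by
    have hbase : ((· * (X x)⁻¹) ∘ X) x = 1 := mul_inv_cancel (X x)
    rw [hfactor, mfderiv_comp x (hbase ▸ horbit) htranslate, hbase,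
      mfderiv_comp x mdifferentiableAt_mul_right hX]
  rw [hchain]
  change mfderiv J I (fun Y => φ Y (φ (X x) ξ)) 1
    (mfderiv J J (· * (X x)⁻¹) (X x) (mfderiv K J X x w)) = _
  rw [hv, mfderiv_mul_right_inv_mfderiv_mul_right]

end

theorem stmt_5_general
    {E : Type*} [NormedAddCommGroup E] [NormedSpace ℝ E]
    {H : Type*} [TopologicalSpace H] {I : ModelWithCorners ℝ E H}
    {M : Type*} [TopologicalSpace M] [ChartedSpace H M]
    {E' : Type*} [NormedAddCommGroup E'] [NormedSpace ℝ E']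
    {H' : Type*} [TopologicalSpace H'] {J : ModelWithCorners ℝ E' H'}
    {G : Type*} [TopologicalSpace G] [ChartedSpace H' G] [Group G] [LieGroup J (⊤ : ℕ∞) G]
    {L : Type*} [NormedAddCommGroup L] [NormedSpace ℝ L]
    (φ : G → M → M)
    (hφ_comp : ∀ (X Y : G) (p : M), φ X (φ Y p) = φ (X * Y) p)
    (hφ_smooth : ContMDiff (J.prod I) I (⊤ : ℕ∞) (fun q : G × M => φ q.1 q.2))
    (f₀ : (p : M) → TangentSpace I p)
    (g : (p : M) → L →L[ℝ] TangentSpace I p)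
    (Λ : M → L → TangentSpace J (1 : G))
    (hlift : ∀ (p : M) (u : L), mfderiv J I (fun Y => φ Y p) 1 (Λ p u) = f₀ p + g p u)
    (ξo : M) (u : ℝ → L)
    (X : ℝ → G) (hX : MDifferentiable 𝓘(ℝ, ℝ) J X)
    (hX_ode : ∀ t : ℝ, mfderiv 𝓘(ℝ, ℝ) J X t (1 : ℝ)
      = mfderiv J J (fun Y => Y * X t) 1 (Λ (φ (X t) ξo) (u t))) :
    ∀ t : ℝ, (id (mfderiv 𝓘(ℝ, ℝ) I (fun s => φ (X s) ξo) t (1 : ℝ)) : E)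
      = (id (f₀ (φ (X t) ξo) + g (φ (X t) ξo) (u t)) : E) := by
  intro t
  have horbit (p : M) : MDifferentiableAt J I (fun Y => φ Y p) 1 :=
    (hφ_smooth.comp (contMDiff_id.prodMk contMDiff_const)).mdifferentiableAt (by simp)
  exact congrArg id <| (mfderiv_orbit_comp_of_mfderiv_eq_mfderiv_mul_right hφ_comp
    (horbit _) (hX t) (hX_ode t)).trans (hlift _ _)

/-- **projection of lifted trajectories.**
Let `M` be a smooth manifold with a smooth left action `φ` of a Lie group `G`, let
`f_u = f₀ + g[u]` be an input-affine system on `M` and let `Λ` be a lift, i.e.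
`Dφ_p|₁[Λ(p,u)] = f_u(p)` for all `p, u`.  Fix an origin `ξo ∈ M`.  If
`X : [0,t_f] → G` solves the lifted system `Ẋ = D R_X|₁[Λ(φ(X, ξo), u)]`, then the
projected curve `ξ(t) = φ(X(t), ξo)` is a trajectory of the original system:
`ξ̇(t) = f_{u(t)}(ξ(t))` for all `t`. -/
theorem stmt_5
    {E : Type*} [NormedAddCommGroup E] [NormedSpace ℝ E]
    {H : Type*} [TopologicalSpace H] {I : ModelWithCorners ℝ E H}
    {M : Type*} [TopologicalSpace M] [ChartedSpace H M] [IsManifold I (⊤ : ℕ∞) M]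
    {E' : Type*} [NormedAddCommGroup E'] [NormedSpace ℝ E']
    {H' : Type*} [TopologicalSpace H'] {J : ModelWithCorners ℝ E' H'}
    {G : Type*} [TopologicalSpace G] [ChartedSpace H' G] [Group G] [LieGroup J (⊤ : ℕ∞) G]
    {L : Type*} [NormedAddCommGroup L] [NormedSpace ℝ L] [FiniteDimensional ℝ L]
    (φ : G → M → M)
    (hφ_id : ∀ p : M, φ 1 p = p)
    (hφ_comp : ∀ (X Y : G) (p : M), φ X (φ Y p) = φ (X * Y) p)
    (hφ_smooth : ContMDiff (J.prod I) I (⊤ : ℕ∞) (fun q : G × M => φ q.1 q.2))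
    (f₀ : (p : M) → TangentSpace I p)
    (g : (p : M) → L →L[ℝ] TangentSpace I p)
    (Λ : M → L → TangentSpace J (1 : G))
    (hΛ_smooth : ContMDiff (I.prod 𝓘(ℝ, L)) 𝓘(ℝ, E') (⊤ : ℕ∞) (fun q : M × L => (id (Λ q.1 q.2) : E')))
    (hlift : ∀ (p : M) (u : L), mfderiv J I (fun Y => φ Y p) 1 (Λ p u) = f₀ p + g p u)
    (ξo : M) (u : ℝ → L)
    (X : ℝ → G) (hX : MDifferentiable 𝓘(ℝ, ℝ) J X)
    (hX_ode : ∀ t : ℝ, mfderiv 𝓘(ℝ, ℝ) J X t (1 : ℝ)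
      = mfderiv J J (fun Y => Y * X t) 1 (Λ (φ (X t) ξo) (u t))) :
    ∀ t : ℝ, (id (mfderiv 𝓘(ℝ, ℝ) I (fun s => φ (X s) ξo) t (1 : ℝ)) : E)
      = (id (f₀ (φ (X t) ξo) + g (φ (X t) ξo) (u t)) : E) :=
  stmt_5_general φ hφ_comp hφ_smooth f₀ g Λ hlift ξo u X hX hX_ode
end

section
/- Let ξ_d : [0,t_f] → M solve ξ̇_d = f_{u_d(t)}(ξ_d) with ξ_d(0) = ξ_d⁰, and let X_d : [0,t_f] → G solve the lifted system Ẋ_d(t) = D R_{X_d(t)}|_Id[Λ(φ(X_d(t), ξ̄), u_d(t))] with initial condition X_d(0) = X_d⁰ satisfying φ(X_d⁰, ξ̄) = ξ_d⁰. Assume solutions of the time-dependent ODE ξ̇ = f_{u_d(t)}(ξ) on M are unique for each initial condition. Then φ(X_d(t), ξ̄) = ξ_d(t) for all t ∈ [0,t_f]. -/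
open scoped Manifold

/-!
Since `φ (Y * X) p = φ Y (φ X p)`, the orbit map of `p` composed with right translation by `X`
is the orbit map of `φ X p`. Differentiating this along the lifted trajectory, the lift property
shows that `t ↦ φ (X_d t) ξo` solves the same ODE as `ξ_d`, from the same initial point, so
the two curves agree by uniqueness.
-/

theorem orbit_comp_mul_right {G M : Type*} [Mul G] {φ : G → M → M}
    (hφ_comp : ∀ (X Y : G) (p : M), φ X (φ Y p) = φ (X * Y) p) (X : G) (p : M) :
    (fun Y => φ Y p) ∘ (· * X) = fun Y => φ Y (φ X p) := by
  funext Y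
  simp only [Function.comp_apply, hφ_comp]

section OrbitMap

variable {E : Type*} [NormedAddCommGroup E] [NormedSpace ℝ E]
  {H : Type*} [TopologicalSpace H] {I : ModelWithCorners ℝ E H}
  {M : Type*} [TopologicalSpace M] [ChartedSpace H M]
  {E' : Type*} [NormedAddCommGroup E'] [NormedSpace ℝ E']
  {H' : Type*} [TopologicalSpace H'] {J : ModelWithCorners ℝ E' H'}
  {G : Type*} [TopologicalSpace G] [ChartedSpace H' G] [Monoid G] [ContMDiffMul J 1 G]
  {φ : G → M → M}

theorem mfderiv_orbit_mfderiv_mul_right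
    (hφ_comp : ∀ (X Y : G) (p : M), φ X (φ Y p) = φ (X * Y) p) {X : G} {p : M}
    (hψ : MDifferentiableAt J I (fun Y => φ Y p) X) (v : TangentSpace J (1 : G)) :
    mfderiv J I (fun Y => φ Y p) X (mfderiv J J (· * X) 1 v)
      = mfderiv J I (fun Y => φ Y (φ X p)) 1 v := by
  rw [← orbit_comp_mul_right hφ_comp]
  exact (mfderiv_comp_apply_of_eq 1 hψ mdifferentiableAt_mul_right (one_mul X) v).symm

theorem mfderiv_orbit_curve_of_mfderiv_eq_mul_right
    (hφ_comp : ∀ (X Y : G) (p : M), φ X (φ Y p) = φ (X * Y) p) {X : ℝ → G} {t : ℝ} {p : M}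
    (hψ : MDifferentiableAt J I (fun Y => φ Y p) (X t))
    (hX : MDifferentiableAt 𝓘(ℝ, ℝ) J X t) {v : TangentSpace J (1 : G)}
    (hX_deriv : mfderiv 𝓘(ℝ, ℝ) J X t 1 = mfderiv J J (· * X t) 1 v) :
    mfderiv 𝓘(ℝ, ℝ) I (fun s => φ (X s) p) t 1 = mfderiv J I (fun Y => φ Y (φ (X t) p)) 1 v := by
  rw [← mfderiv_orbit_mfderiv_mul_right hφ_comp hψ, ← hX_deriv]
  exact mfderiv_comp_apply (g := fun Y => φ Y p) t hψ hX 1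

end OrbitMap

theorem stmt_6_general
    {E : Type*} [NormedAddCommGroup E] [NormedSpace ℝ E]
    {H : Type*} [TopologicalSpace H] {I : ModelWithCorners ℝ E H}
    {M : Type*} [TopologicalSpace M] [ChartedSpace H M]
    {E' : Type*} [NormedAddCommGroup E'] [NormedSpace ℝ E']
    {H' : Type*} [TopologicalSpace H'] {J : ModelWithCorners ℝ E' H'}
    {G : Type*} [TopologicalSpace G] [ChartedSpace H' G] [Group G] [LieGroup J (⊤ : ℕ∞) G]
    {L : Type*} [NormedAddCommGroup L] [NormedSpace ℝ L]
    (φ : G → M → M)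
    (hφ_comp : ∀ (X Y : G) (p : M), φ X (φ Y p) = φ (X * Y) p)
    (hφ_smooth : ContMDiff (J.prod I) I (⊤ : ℕ∞) (fun q : G × M => φ q.1 q.2))
    (f₀ : (p : M) → TangentSpace I p)
    (g : (p : M) → L →L[ℝ] TangentSpace I p)
    (Λ : M → L → TangentSpace J (1 : G))
    (hlift : ∀ (p : M) (u : L), mfderiv J I (fun Y => φ Y p) 1 (Λ p u) = f₀ p + g p u)
    (ξo : M) (t_f : ℝ) (u_d : ℝ → L)
    -- the desired trajectory
    (ξ_d : ℝ → M) (ξ_d0 : M) (hξ_d0 : ξ_d 0 = ξ_d0)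
    (hξ_d_diff : ∀ t ∈ Set.Icc (0 : ℝ) t_f, MDifferentiableAt 𝓘(ℝ, ℝ) I ξ_d t)
    (hξ_d_ode : ∀ t ∈ Set.Icc (0 : ℝ) t_f,
      (id (mfderiv 𝓘(ℝ, ℝ) I ξ_d t (1 : ℝ)) : E) = (id (f₀ (ξ_d t) + g (ξ_d t) (u_d t)) : E))
    -- the lifted trajectory, with matching initial condition
    (X_d : ℝ → G) (X_d0 : G) (hX_d0 : X_d 0 = X_d0)
    (hX_d_init : φ X_d0 ξo = ξ_d0)
    (hX_d_diff : ∀ t ∈ Set.Icc (0 : ℝ) t_f, MDifferentiableAt 𝓘(ℝ, ℝ) J X_d t)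
    (hX_d_ode : ∀ t ∈ Set.Icc (0 : ℝ) t_f, mfderiv 𝓘(ℝ, ℝ) J X_d t (1 : ℝ)
      = mfderiv J J (fun Y => Y * X_d t) 1 (Λ (φ (X_d t) ξo) (u_d t)))
    -- uniqueness of solutions of the time-dependent ODE `ξ̇ = f_{u_d(t)}(ξ)` on `M`
    (huniq : ∀ γ₁ γ₂ : ℝ → M,
      (∀ t ∈ Set.Icc (0 : ℝ) t_f, MDifferentiableAt 𝓘(ℝ, ℝ) I γ₁ t) →
      (∀ t ∈ Set.Icc (0 : ℝ) t_f,
        (id (mfderiv 𝓘(ℝ, ℝ) I γ₁ t (1 : ℝ)) : E) = (id (f₀ (γ₁ t) + g (γ₁ t) (u_d t)) : E)) →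
      (∀ t ∈ Set.Icc (0 : ℝ) t_f, MDifferentiableAt 𝓘(ℝ, ℝ) I γ₂ t) →
      (∀ t ∈ Set.Icc (0 : ℝ) t_f,
        (id (mfderiv 𝓘(ℝ, ℝ) I γ₂ t (1 : ℝ)) : E) = (id (f₀ (γ₂ t) + g (γ₂ t) (u_d t)) : E)) →
      γ₁ 0 = γ₂ 0 → ∀ t ∈ Set.Icc (0 : ℝ) t_f, γ₁ t = γ₂ t) :
    ∀ t ∈ Set.Icc (0 : ℝ) t_f, φ (X_d t) ξo = ξ_d t := by
  have hψ (p : M) : MDifferentiable J I (fun Y => φ Y p) :=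
    (hφ_smooth.comp (contMDiff_id.prodMk contMDiff_const)).mdifferentiable (by simp)
  refine huniq (fun s => φ (X_d s) ξo) ξ_d (fun s hs => (hψ ξo _).comp s (hX_d_diff s hs))
    (fun s hs => ?_) hξ_d_diff hξ_d_ode (by rw [hX_d0, hX_d_init, hξ_d0])
  rw [← hlift]
  exact mfderiv_orbit_curve_of_mfderiv_eq_mul_right hφ_comp (hψ ξo _) (hX_d_diff s hs)
    (hX_d_ode s hs)

/-- **lifted trajectories project onto the desired trajectory.**
Let `M` be a smooth manifold with a smooth left action `φ` of a Lie group `G`, let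
`f_u = f₀ + g[u]` be an input-affine system on `M`, let `Λ` be a lift and fix an
origin `ξo ∈ M`.  Let `ξ_d : [0,t_f] → M` solve `ξ̇_d = f_{u_d(t)}(ξ_d)` with
`ξ_d(0) = ξ_d⁰`, and let `X_d : [0,t_f] → G` solve the lifted system
`Ẋ_d = D R_{X_d}|₁[Λ(φ(X_d, ξo), u_d)]` with `φ(X_d(0), ξo) = ξ_d⁰`.
Assume solutions of the time-dependent ODE `ξ̇ = f_{u_d(t)}(ξ)` on `M` are unique for
each initial condition.  Then `φ(X_d(t), ξo) = ξ_d(t)` for all `t ∈ [0, t_f]`. -/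
theorem stmt_6
    {E : Type*} [NormedAddCommGroup E] [NormedSpace ℝ E]
    {H : Type*} [TopologicalSpace H] {I : ModelWithCorners ℝ E H}
    {M : Type*} [TopologicalSpace M] [ChartedSpace H M] [IsManifold I (⊤ : ℕ∞) M]
    {E' : Type*} [NormedAddCommGroup E'] [NormedSpace ℝ E']
    {H' : Type*} [TopologicalSpace H'] {J : ModelWithCorners ℝ E' H'}
    {G : Type*} [TopologicalSpace G] [ChartedSpace H' G] [Group G] [LieGroup J (⊤ : ℕ∞) G]
    {L : Type*} [NormedAddCommGroup L] [NormedSpace ℝ L] [FiniteDimensional ℝ L]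
    (φ : G → M → M)
    (hφ_id : ∀ p : M, φ 1 p = p)
    (hφ_comp : ∀ (X Y : G) (p : M), φ X (φ Y p) = φ (X * Y) p)
    (hφ_smooth : ContMDiff (J.prod I) I (⊤ : ℕ∞) (fun q : G × M => φ q.1 q.2))
    (f₀ : (p : M) → TangentSpace I p)
    (g : (p : M) → L →L[ℝ] TangentSpace I p)
    (Λ : M → L → TangentSpace J (1 : G))
    (hΛ_smooth : ContMDiff (I.prod 𝓘(ℝ, L)) 𝓘(ℝ, E') (⊤ : ℕ∞) (fun q : M × L => (id (Λ q.1 q.2) : E')))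
    (hlift : ∀ (p : M) (u : L), mfderiv J I (fun Y => φ Y p) 1 (Λ p u) = f₀ p + g p u)
    (ξo : M) (t_f : ℝ) (u_d : ℝ → L)
    -- the desired trajectory
    (ξ_d : ℝ → M) (ξ_d0 : M) (hξ_d0 : ξ_d 0 = ξ_d0)
    (hξ_d_diff : ∀ t ∈ Set.Icc (0 : ℝ) t_f, MDifferentiableAt 𝓘(ℝ, ℝ) I ξ_d t)
    (hξ_d_ode : ∀ t ∈ Set.Icc (0 : ℝ) t_f,
      (id (mfderiv 𝓘(ℝ, ℝ) I ξ_d t (1 : ℝ)) : E) = (id (f₀ (ξ_d t) + g (ξ_d t) (u_d t)) : E))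
    -- the lifted trajectory, with matching initial condition
    (X_d : ℝ → G) (X_d0 : G) (hX_d0 : X_d 0 = X_d0)
    (hX_d_init : φ X_d0 ξo = ξ_d0)
    (hX_d_diff : ∀ t ∈ Set.Icc (0 : ℝ) t_f, MDifferentiableAt 𝓘(ℝ, ℝ) J X_d t)
    (hX_d_ode : ∀ t ∈ Set.Icc (0 : ℝ) t_f, mfderiv 𝓘(ℝ, ℝ) J X_d t (1 : ℝ)
      = mfderiv J J (fun Y => Y * X_d t) 1 (Λ (φ (X_d t) ξo) (u_d t)))
    -- uniqueness of solutions of the time-dependent ODE `ξ̇ = f_{u_d(t)}(ξ)` on `M`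
    (huniq : ∀ γ₁ γ₂ : ℝ → M,
      (∀ t ∈ Set.Icc (0 : ℝ) t_f, MDifferentiableAt 𝓘(ℝ, ℝ) I γ₁ t) →
      (∀ t ∈ Set.Icc (0 : ℝ) t_f,
        (id (mfderiv 𝓘(ℝ, ℝ) I γ₁ t (1 : ℝ)) : E) = (id (f₀ (γ₁ t) + g (γ₁ t) (u_d t)) : E)) →
      (∀ t ∈ Set.Icc (0 : ℝ) t_f, MDifferentiableAt 𝓘(ℝ, ℝ) I γ₂ t) →
      (∀ t ∈ Set.Icc (0 : ℝ) t_f,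
        (id (mfderiv 𝓘(ℝ, ℝ) I γ₂ t (1 : ℝ)) : E) = (id (f₀ (γ₂ t) + g (γ₂ t) (u_d t)) : E)) →
      γ₁ 0 = γ₂ 0 → ∀ t ∈ Set.Icc (0 : ℝ) t_f, γ₁ t = γ₂ t) :
    ∀ t ∈ Set.Icc (0 : ℝ) t_f, φ (X_d t) ξo = ξ_d t :=
  stmt_6_general φ hφ_comp hφ_smooth f₀ g Λ hlift ξo t_f u_d ξ_d ξ_d0 hξ_d0 hξ_d_diff hξ_d_ode X_d
    X_d0 hX_d0 hX_d_init hX_d_diff hX_d_ode huniq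
end
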